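/- arXiv:1603.04923 — 9 statements merged into one kernel-verified Lean document; each statement's English description precedes it below -/
import Mathlib

section
/- For any r-edge-coloring of K_{m,n} with r ≥ 2 and n ≥ m ≥ 1, there exist two vertices u, v in the class of size n such that the number of common neighbors w with c({u,w}) ≠ c({v,w}) is at most (1 - 1/r)·(1 + 1/(n-1))·m. Equivalently, κ_{r,2}(m,n) ≤ (1 - 1/r)(1 + 1/(n-1))·m, where κ_{r,2}(m,n) is the maximum over r-edge-colorings of the minimum over pairs u,v in the class of size n of the number of alternating paths of length 2 between u and v. -/
/-!
Fix a vertex `w` of the small class and split the big class into its `r` colour classes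
`A₁, …, A_r` according to the colour of the edge to `w`. The ordered pairs `(u, v)` for which `w`
is alternating number `n² - ∑ |Aᵢ|²`, which is at most `n² (1 - 1/r)` by Cauchy–Schwarz. Summing
over `w`, the `n (n - 1)` ordered pairs of distinct vertices carry at most `m n² (1 - 1/r)`
alternating paths in total, so some pair carries at most the average
`(1 - 1/r) · n/(n-1) · m = (1 - 1/r)(1 + 1/(n-1)) m`.
-/

open Finset

section ColourClasses

variable {α β : Type*} [Fintype α] [Fintype β] [DecidableEq β] (f : α → β)

theorem sum_card_eq_eq_sum_card_fiber_sq :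
    ∑ u, #{v | f u = f v} = ∑ i, #{u | f u = i} ^ 2 := by
  rw [← sum_fiberwise univ f (fun u => #{v | f u = f v})]
  refine sum_congr rfl fun i _ => ?_
  rw [sum_congr rfl fun u hu => by rw [(mem_filter.1 hu).2]]
  simp [sq, eq_comm]

theorem card_sq_le_card_mul_sum_card_fiber_sq :
    Fintype.card α ^ 2 ≤ Fintype.card β * ∑ i, #{u | f u = i} ^ 2 := by
  have h := sq_sum_le_card_mul_sum_sq (s := univ) (f := fun i => #{u | f u = i})
  rwa [← card_eq_sum_card_fiberwise (by simp)] at h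

variable {K : Type*} [Field K] [LinearOrder K] [IsStrictOrderedRing K]

theorem sum_card_ne_eq_card_sq_sub :
    ∑ u, (#{v | f u ≠ f v} : K) = Fintype.card α ^ 2 - ∑ i, (#{u | f u = i} : K) ^ 2 := by
  have hrow : ∀ u, (#{v | f u ≠ f v} : K) = Fintype.card α - #{v | f u = f v} := fun u => by
    rw [← card_univ, ← card_filter_add_card_filter_not (s := univ) (f u = f ·)]
    push_cast
    ring
  have hsq : ∑ u, (#{v | f u = f v} : K) = ∑ i, (#{u | f u = i} : K) ^ 2 := by
    exact_mod_cast sum_card_eq_eq_sum_card_fiber_sq f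
  rw [sum_congr rfl fun u _ => hrow u, sum_sub_distrib, hsq, sum_const, card_univ, nsmul_eq_mul]
  ring

theorem sum_card_ne_le :
    ∑ u, (#{v | f u ≠ f v} : K) ≤ Fintype.card α ^ 2 * (1 - 1 / Fintype.card β) := by
  have hcs : (Fintype.card α : K) ^ 2 / Fintype.card β ≤ ∑ i, (#{u | f u = i} : K) ^ 2 :=
    div_le_of_le_mul₀ (by positivity) (by positivity)
      (by rw [mul_comm]; exact_mod_cast card_sq_le_card_mul_sum_card_fiber_sq f)
  rw [sum_card_ne_eq_card_sq_sub, mul_one_sub, mul_one_div]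
  linarith

end ColourClasses

theorem sum_sum_card_filter_comm {α γ : Type*} [Fintype α] [Fintype γ] (p : α → α → γ → Prop)
    [∀ u v w, Decidable (p u v w)] :
    ∑ u, ∑ v, #{w | p u v w} = ∑ w, ∑ u, #{v | p u v w} := by
  simp only [card_filter]
  exact (sum_congr rfl fun _ _ => sum_comm).trans sum_comm

theorem exists_ne_le_of_sum_sum_le {α K : Type*} [Fintype α] [Nontrivial α] [Field K]
    [LinearOrder K] [IsStrictOrderedRing K] (D : α → α → K) (hD : ∀ u, D u u = 0) {B : K}
    (h : ∑ u, ∑ v, D u v ≤ Fintype.card α * (Fintype.card α - 1) * B) :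
    ∃ u v, u ≠ v ∧ D u v ≤ B := by
  classical
  by_contra! hlt
  have hrow : ∀ u, (Fintype.card α - 1) * B < ∑ v, D u v := by
    intro u
    rw [← sum_erase _ (hD u)]
    have := sum_lt_sum_of_nonempty (s := univ.erase u) (f := fun _ => B)
      univ_nontrivial.erase_nonempty fun v hv => hlt u v (ne_of_mem_erase hv).symm
    rwa [sum_const, nsmul_eq_mul, cast_card_erase_of_mem (mem_univ u), card_univ] at this
  have := sum_lt_sum_of_nonempty univ_nonempty fun u (_ : u ∈ univ) => hrow u
  simp only [sum_const, card_univ, nsmul_eq_mul] at this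
  linarith

theorem stmt1_general (m n r : ℕ) (hn : 2 ≤ n)
    (c : Fin n → Fin m → Fin r) :
    ∃ u v : Fin n, u ≠ v ∧
      ((Finset.univ.filter (fun w : Fin m => c u w ≠ c v w)).card : ℚ)
        ≤ (1 - 1 / (r : ℚ)) * (1 + 1 / ((n : ℚ) - 1)) * m := by
  have : Nontrivial (Fin n) := Fin.nontrivial_iff_two_le.2 hn
  refine exists_ne_le_of_sum_sum_le _ (fun u => by simp) ?_
  have hn1 : (n : ℚ) - 1 ≠ 0 := by
    have : (2 : ℚ) ≤ n := by exact_mod_cast hn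
    linarith
  calc ∑ u, ∑ v, (#{w | c u w ≠ c v w} : ℚ)
      = ∑ w, ∑ u, (#{v | c u w ≠ c v w} : ℚ) := by
        exact_mod_cast sum_sum_card_filter_comm fun u v w => c u w ≠ c v w
    _ ≤ ∑ _w : Fin m, (n : ℚ) ^ 2 * (1 - 1 / r) :=
        sum_le_sum fun w _ => by simpa using sum_card_ne_le (K := ℚ) fun u => c u w
    _ = _ := by
        simp only [sum_const, card_univ, Fintype.card_fin, nsmul_eq_mul]
        field_simp
        ring

/-- For any `r`-edge-coloring of `K_{m,n}` (`r ≥ 2`, `n ≥ m ≥ 1`), there exist two distinct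
vertices `u, v` in the class of size `n` with at most `(1 - 1/r)(1 + 1/(n-1)) m` alternating
paths of length 2 between them. -/
theorem stmt1 (m n r : ℕ) (hr : 2 ≤ r) (hm : 1 ≤ m) (hmn : m ≤ n) (hn : 2 ≤ n)
    (c : Fin n → Fin m → Fin r) :
    ∃ u v : Fin n, u ≠ v ∧
      ((Finset.univ.filter (fun w : Fin m => c u w ≠ c v w)).card : ℚ)
        ≤ (1 - 1 / (r : ℚ)) * (1 + 1 / ((n : ℚ) - 1)) * m :=
  stmt1_general m n r hn c
end

section
/- Let H be a bipartite graph on U ∪ W with U = A ∪ A', W = B ∪ B', |A| = |B|, |A'| = |B'| = s, such that every vertex of A' is adjacent to all of W, every vertex of B' is adjacent to all of U, and suppose that every set S ⊆ A with |S| = s satisfies |N_H(S)| ≥ |U|/2, and symmetrically every T ⊆ B with |T| = s satisfies |N_H(T)| ≥ |W|/2. Then H has a perfect matching. -/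
/-- Hall-type lemma: a bipartite graph on `U = A ∪ A'` and `W = B ∪ B'` with `|A| = |B|`,
`|A'| = |B'| = s`, where `A'` is complete to `W` and `B'` is complete to `U`, and where every
`s`-subset of `A` (resp. `B`) has neighborhood of size at least half of `U` (resp. `W`),
has a perfect matching. -/
theorem stmt6 {U W : Type*} [Fintype U] [Fintype W] [DecidableEq U] [DecidableEq W]
    (r : U → W → Prop) [∀ u w, Decidable (r u w)]
    (A A' : Finset U) (B B' : Finset W) (s : ℕ)
    (hU : A ∪ A' = Finset.univ) (hAA : Disjoint A A')
    (hW : B ∪ B' = Finset.univ) (hBB : Disjoint B B')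
    (hAB : A.card = B.card) (hA' : A'.card = s) (hB' : B'.card = s)
    (ha' : ∀ a ∈ A', ∀ w, r a w) (hb' : ∀ b ∈ B', ∀ u, r u b)
    (hallA : ∀ S ⊆ A, S.card = s →
      Fintype.card U ≤ 2 * (Finset.univ.filter (fun w : W => ∃ u ∈ S, r u w)).card)
    (hallB : ∀ T ⊆ B, T.card = s →
      Fintype.card W ≤ 2 * (Finset.univ.filter (fun u : U => ∃ w ∈ T, r u w)).card) :
    ∃ f : U ≃ W, ∀ u, r u (f u) := by

  classical
  have hcardU : Fintype.card U = A.card + A'.card := by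
    rw [← Finset.card_union_of_disjoint hAA, hU, Finset.card_univ]
  have hcardW : Fintype.card W = B.card + B'.card := by
    rw [← Finset.card_union_of_disjoint hBB, hW, Finset.card_univ]
  have hUW : Fintype.card U = Fintype.card W := by
    rw [hcardU, hcardW, hAB, hA', hB']
  have key : ∀ S : Finset U,
      S.card ≤ (S.biUnion fun u => Finset.univ.filter (fun w => r u w)).card := by
    intro S
    set N := S.biUnion fun u => Finset.univ.filter (fun w => r u w) with hN
    have hNmem : ∀ w, w ∈ N ↔ ∃ u ∈ S, r u w := by intro w; simp [hN]
    by_cases hSA' : ∃ a ∈ S, a ∈ A'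
    · obtain ⟨a, haS, haA'⟩ := hSA'
      have hNu : N = Finset.univ := by
        ext w
        simp only [Finset.mem_univ, iff_true, hNmem]
        exact ⟨a, haS, ha' a haA' w⟩
      rw [hNu, Finset.card_univ, ← hUW, ← Finset.card_univ]
      exact Finset.card_le_univ S
    · push_neg at hSA'
      have hSA : S ⊆ A := by
        intro a haS
        have : a ∈ A ∪ A' := by rw [hU]; exact Finset.mem_univ a
        rcases Finset.mem_union.1 this with h | h
        · exact h
        · exact absurd h (hSA' a haS)
      rcases S.eq_empty_or_nonempty with rfl | ⟨a0, ha0⟩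
      · simp
      have hB'N : B' ⊆ N := by
        intro b hb
        exact (hNmem b).2 ⟨a0, ha0, hb' b hb a0⟩
      have hsN : s ≤ N.card := hB' ▸ Finset.card_le_card hB'N
      rcases lt_or_ge S.card s with hlt | hge
      · exact hlt.le.trans hsN
      · by_contra hcon
        push_neg at hcon
        -- 2 * N.card ≥ card U
        obtain ⟨S', hS'sub, hS'card⟩ := Finset.exists_subset_card_eq hge
        have hNS' : (Finset.univ.filter (fun w : W => ∃ u ∈ S', r u w)) ⊆ N := by
          intro w hw
          obtain ⟨u, hu, hru⟩ := (Finset.mem_filter.1 hw).2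
          exact (hNmem w).2 ⟨u, hS'sub hu, hru⟩
        have h2N : Fintype.card U ≤ 2 * N.card :=
          (hallA S' (hS'sub.trans hSA) hS'card).trans
            (Nat.mul_le_mul_left 2 (Finset.card_le_card hNS'))
        -- T = complement of N
        have hTB : Nᶜ ⊆ B := by
          intro w hw
          have hwN : w ∉ N := Finset.mem_compl.1 hw
          have : w ∈ B ∪ B' := by rw [hW]; exact Finset.mem_univ w
          rcases Finset.mem_union.1 this with h | h
          · exact h
          · exact absurd (hB'N h) hwN
        have hScard : S.card ≤ B.card := hAB ▸ Finset.card_le_card hSA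
        have hTcard : s ≤ Nᶜ.card := by
          rw [Finset.card_compl, hcardW, hB']
          omega
        obtain ⟨T', hT'sub, hT'card⟩ := Finset.exists_subset_card_eq hTcard
        have hMsub : (Finset.univ.filter (fun u : U => ∃ w ∈ T', r u w)) ⊆ Sᶜ := by
          intro u hu
          obtain ⟨w, hw, hrw⟩ := (Finset.mem_filter.1 hu).2
          rw [Finset.mem_compl]
          intro huS
          exact Finset.mem_compl.1 (hT'sub hw) ((hNmem w).2 ⟨u, huS, hrw⟩)
        have hM : Fintype.card W ≤ 2 * (Fintype.card U - S.card) := by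
          refine (hallB T' (hT'sub.trans hTB) hT'card).trans ?_
          refine Nat.mul_le_mul_left 2 ?_
          have := Finset.card_le_card hMsub
          rwa [Finset.card_compl] at this
        omega
  obtain ⟨f, hfinj, hf⟩ :=
    (Finset.all_card_le_biUnion_card_iff_exists_injective
      (fun u : U => Finset.univ.filter (fun w => r u w))).1 key
  have hbij : Function.Bijective f :=
    (Fintype.bijective_iff_injective_and_card f).2 ⟨hfinj, hUW⟩
  refine ⟨Equiv.ofBijective f hbij, fun u => ?_⟩
  have := hf u
  simpa using this
end

section
/- With high probability as m → ∞, the random bipartite graph G(m,m,1/2) on M₁ ∪ M₂ has the property that for every A ⊆ M₁ and B ⊆ M₂ with |A| = |B| = αm (0 < α < 1 fixed), there is a matching between A and B of size at least αm − log m. -/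
/-!
Defect form of Hall's theorem: if every `S ⊆ A` has at least `|S| - d` neighbours in `B`, Hall's
theorem applied after adding `d` dummy vertices adjacent to all of `A` yields a matching of size
`|A| - d`. With `|A| = |B| = K` and `d + 1 = ⌊log m⌋`, a violation gives `S ⊆ A` and
`T ⊆ B \ N(S)` with no edges between them, `d < |S| ≤ K` and `|S| + |T| = K + d + 1`, hence
`|S| |T| ≥ (d + 1) K ≥ 4m`. A union bound over the at most `4^m` pairs `(S, T)` shows that such a
pair exists with probability at most `4^m 2^(-4m) = 4^(-m)`.
-/

open Finset Filter

variable {U V : Type*}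

theorem exists_matching_of_card_le_card_neighbors_add [Nonempty V] (g : U → V → Bool)
    (A : Finset U) (B : Finset V) (d : ℕ)
    (H : ∀ S ⊆ A, #S ≤ #{b ∈ B | ∃ a ∈ S, g a b} + d) :
    ∃ A' ⊆ A, ∃ f : U → V, #A ≤ #A' + d ∧ Set.InjOn f A' ∧ ∀ a ∈ A', f a ∈ B ∧ g a (f a) := by
  classical
  set t : A → Finset (V ⊕ Fin d) := fun a => {b ∈ B | g a b}.disjSum univ
  have hall (s : Finset A) : #s ≤ #(s.biUnion t) := by
    rcases s.eq_empty_or_nonempty with rfl | ⟨a₀, ha₀⟩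
    · simp
    have hunion : s.biUnion t = {b ∈ B | ∃ a ∈ s.map (.subtype _), g a b}.disjSum univ := by
      ext (b | j)
      · simp only [t, mem_biUnion, inl_mem_disjSum, mem_filter, Finset.mem_map]
        aesop
      · simpa [t] using ⟨a₀.1, a₀.2, ha₀⟩
    rw [hunion, card_disjSum, card_univ, Fintype.card_fin, ← card_map (.subtype _)]
    exact H _ (by simp +contextual [subset_iff])
  obtain ⟨φ, hφ, hφt⟩ := (all_card_le_biUnion_card_iff_exists_injective t).1 hall
  obtain ⟨v₀⟩ := ‹Nonempty V›
  set L : Finset A := {a | (φ a).isLeft} with hL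
  let f : U → V := fun x => if hx : x ∈ A then (φ ⟨x, hx⟩).elim id fun _ => v₀ else v₀
  have hφf (a : A) (ha : a ∈ L) : φ a = .inl (f a) := by
    obtain ⟨b, hb⟩ := Sum.isLeft_iff.1 (mem_filter.1 ha).2
    simp [f, hb]
  have hdummy : #(univ.filter fun a => ¬ (φ a).isLeft) ≤ d := by
    calc _ ≤ #((univ : Finset (Fin d)).map .inr) := by
          refine card_le_card_of_injOn φ (fun a ha => ?_) hφ.injOn
          obtain ⟨j, hj⟩ := Sum.isRight_iff.1 (Sum.not_isLeft.1 (mem_filter.1 ha).2)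
          simp [hj]
      _ = d := by simp
  refine ⟨L.map (.subtype _), by simp +contextual [subset_iff], f, ?_, ?_, ?_⟩
  · have := card_filter_add_card_filter_not (s := (univ : Finset A)) (fun a => (φ a).isLeft)
    rw [card_univ, Fintype.card_coe, ← hL] at this
    rw [card_map]
    omega
  · rintro _ hx _ hy hxy
    simp only [coe_map, Set.mem_image, mem_coe] at hx hy
    obtain ⟨x, hx, rfl⟩ := hx
    obtain ⟨y, hy, rfl⟩ := hy
    exact congrArg Subtype.val (hφ (by rw [hφf x hx, hφf y hy]; exact congrArg _ hxy))
  · intro _ ha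
    obtain ⟨a, haL, rfl⟩ := Finset.mem_map.1 ha
    simpa [t, hφf a haL] using hφt a

/-- The sizes are those of `S` and `T ⊆ B \ N(S)` when `S` violates Hall's condition with
defect `d` inside two `K`-sets `A`, `B`. -/
def HasEdgelessPair (g : U → V → Bool) (K d : ℕ) : Prop :=
  ∃ (S : Finset U) (T : Finset V), d < #S ∧ #S ≤ K ∧ #S + #T = K + d + 1 ∧
    ∀ a ∈ S, ∀ b ∈ T, g a b = false

theorem exists_matching_of_not_hasEdgelessPair [Nonempty V] {g : U → V → Bool} {K d : ℕ}
    (hg : ¬ HasEdgelessPair g K d) {A : Finset U} {B : Finset V} (hA : #A = K) (hB : #B = K) :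
    ∃ A' ⊆ A, ∃ f : U → V, K ≤ #A' + d ∧ Set.InjOn f A' ∧ ∀ a ∈ A', f a ∈ B ∧ g a (f a) := by
  classical
  rw [← hA]
  refine exists_matching_of_card_le_card_neighbors_add g A B d fun S hS => ?_
  by_contra! hN
  set N : Finset V := {b ∈ B | ∃ a ∈ S, g a b}
  have hNB : N ⊆ B := filter_subset _ _
  have hSK : #S ≤ K := hA ▸ card_le_card hS
  have hroom : K + d + 1 - #S ≤ #(B \ N) := by
    rw [card_sdiff_of_subset hNB, hB]
    omega
  obtain ⟨T, hTN, hT⟩ := exists_subset_card_eq hroom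
  refine hg ⟨S, T, by omega, hSK, by omega, fun a ha b hb => ?_⟩
  have hb := mem_sdiff.1 (hTN hb)
  simpa using fun h => hb.2 (mem_filter.2 ⟨hb.1, a, ha, h⟩)

section Counting

variable [Fintype U] [Fintype V] [DecidableEq U] [DecidableEq V]

theorem card_filter_eq_false_mul_le (S : Finset U) (T : Finset V) :
    #{g : U → V → Bool | ∀ a ∈ S, ∀ b ∈ T, g a b = false} * 2 ^ (#S * #T) ≤
      2 ^ (Fintype.card U * Fintype.card V) := by
  have hrestrict : #{g : U → V → Bool | ∀ a ∈ S, ∀ b ∈ T, g a b = false} ≤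
      Fintype.card ({p : U × V // p ∉ S ×ˢ T} → Bool) := by
    refine card_le_card_of_injOn (t := univ) (fun g p => g p.1.1 p.1.2) (by simp) ?_
    intro g hg g' hg' h
    ext a b
    by_cases hab : (a, b) ∈ S ×ˢ T
    · obtain ⟨ha, hb⟩ := mem_product.1 hab
      rw [(mem_filter.1 (mem_coe.1 hg)).2 a ha b hb, (mem_filter.1 (mem_coe.1 hg')).2 a ha b hb]
    · exact congrFun h ⟨(a, b), hab⟩
  have hST : #S * #T ≤ Fintype.card U * Fintype.card V :=
    Nat.mul_le_mul (card_le_univ S) (card_le_univ T)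
  calc _ ≤ 2 ^ (Fintype.card U * Fintype.card V - #S * #T) * 2 ^ (#S * #T) := by
        gcongr
        rwa [Fintype.card_fun, Fintype.card_bool, Fintype.card_subtype_compl, Fintype.card_prod,
          Fintype.card_coe, card_product] at hrestrict
    _ = _ := pow_sub_mul_pow 2 hST

open scoped Classical in
theorem card_filter_hasEdgelessPair_mul_le (K d : ℕ) :
    #{g : U → V → Bool | HasEdgelessPair g K d} * 2 ^ ((d + 1) * K) ≤
      2 ^ (Fintype.card U + Fintype.card V) * 2 ^ (Fintype.card U * Fintype.card V) := by
  set P : Finset (Finset U × Finset V) :=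
    {p | d < #p.1 ∧ #p.1 ≤ K ∧ #p.1 + #p.2 = K + d + 1}
  set E : Finset U × Finset V → Finset (U → V → Bool) :=
    fun p => {g | ∀ a ∈ p.1, ∀ b ∈ p.2, g a b = false}
  have hsub : univ.filter (fun g : U → V → Bool => HasEdgelessPair g K d) ⊆ P.biUnion E := by
    rintro g hg
    obtain ⟨S, T, h₁, h₂, h₃, hE⟩ := (mem_filter.1 hg).2
    exact mem_biUnion.2
      ⟨(S, T), mem_filter.2 ⟨mem_univ _, h₁, h₂, h₃⟩, mem_filter.2 ⟨mem_univ _, hE⟩⟩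
  have hsize (p) (hp : p ∈ P) : (d + 1) * K ≤ #p.1 * #p.2 := by
    obtain ⟨h₁, h₂, h₃⟩ := (mem_filter.1 hp).2
    nlinarith
  calc _ ≤ (∑ p ∈ P, #(E p)) * 2 ^ ((d + 1) * K) := by
        gcongr
        exact (card_le_card hsub).trans card_biUnion_le
    _ ≤ ∑ p ∈ P, #(E p) * 2 ^ (#p.1 * #p.2) := by
        rw [sum_mul]
        exact sum_le_sum fun p hp =>
          Nat.mul_le_mul_left _ (Nat.pow_le_pow_right two_pos (hsize p hp))
    _ ≤ ∑ p ∈ P, 2 ^ (Fintype.card U * Fintype.card V) :=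
        sum_le_sum fun p _ => card_filter_eq_false_mul_le _ _
    _ ≤ _ := by
        rw [sum_const, smul_eq_mul, pow_add]
        exact Nat.mul_le_mul_right _ ((card_le_univ P).trans_eq (by simp [Fintype.card_finset]))

theorem one_sub_div_le_card_filter_div {P : (U → V → Bool) → Prop} [DecidablePred P] {K d : ℕ}
    (hP : ∀ g, ¬ HasEdgelessPair g K d → P g) :
    1 - (2 : ℝ) ^ (Fintype.card U + Fintype.card V) / 2 ^ ((d + 1) * K) ≤
      #{g | P g} / 2 ^ (Fintype.card U * Fintype.card V) := by
  classical
  set bad := univ.filter fun g : U → V → Bool => HasEdgelessPair g K d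
  have hcover : (2 : ℝ) ^ (Fintype.card U * Fintype.card V) ≤ #{g | P g} + #bad := by
    have : univ ⊆ univ.filter P ∪ bad := fun g _ => by
      by_cases hg : HasEdgelessPair g K d
      · exact mem_union_right _ (mem_filter.2 ⟨mem_univ g, hg⟩)
      · exact mem_union_left _ (mem_filter.2 ⟨mem_univ g, hP g hg⟩)
    have := (card_le_card this).trans (card_union_le _ _)
    rw [card_univ, Fintype.card_fun, Fintype.card_fun, Fintype.card_bool, ← pow_mul'] at this
    exact_mod_cast this
  have hbad : (#bad : ℝ) * 2 ^ ((d + 1) * K) ≤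
      2 ^ (Fintype.card U + Fintype.card V) * 2 ^ (Fintype.card U * Fintype.card V) := by
    exact_mod_cast card_filter_hasEdgelessPair_mul_le K d
  calc _ ≤ 1 - (#bad : ℝ) / 2 ^ (Fintype.card U * Fintype.card V) := by
        refine sub_le_sub_left ?_ 1
        rw [div_le_div_iff₀ (by positivity) (by positivity)]
        linarith
    _ = ((2 : ℝ) ^ (Fintype.card U * Fintype.card V) - #bad) /
          2 ^ (Fintype.card U * Fintype.card V) := by
        field_simp
    _ ≤ _ := by gcongr; linarith

end Counting

theorem eventually_four_mul_le_floor_log_mul_floor {α : ℝ} (hα : 0 < α) :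
    ∀ᶠ m : ℕ in atTop, 1 ≤ ⌊Real.log m⌋₊ ∧ 4 * m ≤ ⌊Real.log m⌋₊ * ⌊α * m⌋₊ := by
  have hlog : Tendsto (fun m : ℕ => ⌊Real.log m⌋₊) atTop atTop :=
    tendsto_nat_floor_atTop.comp (Real.tendsto_log_atTop.comp tendsto_natCast_atTop_atTop)
  filter_upwards [hlog.eventually_ge_atTop (max 1 ⌈8 / α⌉₊),
    (tendsto_natCast_atTop_atTop.const_mul_atTop hα).eventually_ge_atTop 2] with m hD hm
  refine ⟨le_of_max_le_left hD, ?_⟩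
  have hD8 : 8 / α ≤ ⌊Real.log m⌋₊ :=
    (Nat.le_ceil _).trans (by exact_mod_cast le_of_max_le_right hD)
  have hK : α * m / 2 ≤ ⌊α * m⌋₊ := by linarith [Nat.lt_floor_add_one (α * m)]
  have : (4 * m : ℝ) ≤ ⌊Real.log m⌋₊ * ⌊α * m⌋₊ :=
    calc (4 * m : ℝ) = 8 / α * (α * m / 2) := by field_simp; ring
      _ ≤ _ := by gcongr
  exact_mod_cast this

theorem two_pow_add_div_two_pow_four_mul (m : ℕ) :
    (2 : ℝ) ^ (m + m) / 2 ^ (4 * m) = (1 / 4) ^ m := by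
  rw [div_eq_iff (by positivity), one_div_pow, div_mul_eq_mul_div, one_mul,
    eq_div_iff (by positivity), show (4 : ℝ) = 2 ^ 2 by norm_num, ← pow_mul, ← pow_add]
  ring_nf

theorem stmt7_general (α : ℝ) (h1 : 0 < α) :
    Filter.Tendsto (fun m : ℕ =>
      ((Finset.univ.filter (fun g : Fin m → Fin m → Bool =>
          ∀ A B : Finset (Fin m), A.card = ⌊α * m⌋₊ → B.card = ⌊α * m⌋₊ →
            ∃ (A' : Finset (Fin m)) (f : Fin m → Fin m),
              A' ⊆ A ∧ α * m - Real.log m ≤ (A'.card : ℝ) ∧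
              Set.InjOn f ↑A' ∧ ∀ a ∈ A', f a ∈ B ∧ g a (f a) = true)).card : ℝ)
        / 2 ^ (m ^ 2))
      Filter.atTop (nhds 1) := by
  refine tendsto_of_tendsto_of_tendsto_of_le_of_le' (g := fun m : ℕ => 1 - (1 / 4 : ℝ) ^ m)
    (h := fun _ => 1) ?_ tendsto_const_nhds ?_ ?_
  · simpa using tendsto_const_nhds.sub
      (tendsto_pow_atTop_nhds_zero_of_lt_one (r := (1 / 4 : ℝ)) (by norm_num) (by norm_num))
  · filter_upwards [eventually_four_mul_le_floor_log_mul_floor h1] with m ⟨hD, hDK⟩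
    have : Nonempty (Fin m) := ⟨⟨0, Nat.pos_of_ne_zero (by rintro rfl; simp at hD)⟩⟩
    refine le_trans ?_ (le_of_le_of_eq
      (one_sub_div_le_card_filter_div (U := Fin m) (V := Fin m) (K := ⌊α * m⌋₊)
        (d := ⌊Real.log m⌋₊ - 1) fun g hg A B hA hB => ?_)
      (by rw [Fintype.card_fin, sq]))
    · rw [Fintype.card_fin, ← two_pow_add_div_two_pow_four_mul, Nat.sub_add_cancel hD]
      gcongr
      norm_num
    · obtain ⟨A', hA'A, f, hcard, hinj, hf⟩ := exists_matching_of_not_hasEdgelessPair hg hA hB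
      refine ⟨A', f, hA'A, ?_, hinj, hf⟩
      have : (⌊α * m⌋₊ : ℝ) + 1 ≤ #A' + ⌊Real.log m⌋₊ := by
        exact_mod_cast (by omega : ⌊α * m⌋₊ + 1 ≤ #A' + ⌊Real.log m⌋₊)
      linarith [Nat.lt_floor_add_one (α * m), Nat.floor_le (Real.log_natCast_nonneg m)]
  · filter_upwards with m
    rw [div_le_one (by positivity)]
    exact_mod_cast (card_le_univ _).trans_eq (by simp [sq, ← pow_mul])

/-- With high probability as `m → ∞`, the random bipartite graph `G(m,m,1/2)` has the property
that for every `A ⊆ M₁`, `B ⊆ M₂` with `|A| = |B| = αm`, there is a matching between `A` and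
`B` of size at least `αm - log m`. -/
theorem stmt7 (α : ℝ) (h1 : 0 < α) (h2 : α < 1) :
    Filter.Tendsto (fun m : ℕ =>
      ((Finset.univ.filter (fun g : Fin m → Fin m → Bool =>
          ∀ A B : Finset (Fin m), A.card = ⌊α * m⌋₊ → B.card = ⌊α * m⌋₊ →
            ∃ (A' : Finset (Fin m)) (f : Fin m → Fin m),
              A' ⊆ A ∧ α * m - Real.log m ≤ (A'.card : ℝ) ∧
              Set.InjOn f ↑A' ∧ ∀ a ∈ A', f a ∈ B ∧ g a (f a) = true)).card : ℝ)
        / 2 ^ (m ^ 2))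
      Filter.atTop (nhds 1) :=
  stmt7_general α h1
end

section
/- For any 2-coloring of the edges of K_{m,n}, the total number of alternating paths of length 3 is at most m²n²/4. -/
open Finset

/-- Auxiliary: for a boolean function on `Fin k`, the sum over `x` of the squared number of
`y` with `d y ≠ d x` is at most `k³/4`. -/
lemma stmt10_sqsum {k : ℕ} (d : Fin k → Bool) :
    ∑ x : Fin k, ((univ.filter fun y => d y ≠ d x).card : ℚ) ^ 2 ≤ (k : ℚ) ^ 3 / 4 := by
  classical
  set T := univ.filter fun y => d y = true with hT
  have ht : T.card ≤ k := le_trans (card_filter_le _ _) (by simp)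
  have h1 : ∀ x : Fin k, d x = true →
      (univ.filter fun y => d y ≠ d x).card = k - T.card := by
    intro x hx
    have hset : (univ.filter fun y => d y ≠ d x) = univ \ T := by
      rw [hT]
      ext y
      simp [hx]
    rw [hset, card_sdiff_of_subset (subset_univ _)]
    simp
  have h2 : ∀ x : Fin k, d x = false →
      (univ.filter fun y => d y ≠ d x).card = T.card := by
    intro x hx
    rw [hT]
    congr 1
    ext y
    simp [hx]
  rw [← sum_filter_add_sum_filter_not univ (fun x => d x = true)]
  have e1 : ∑ x ∈ univ.filter (fun x => d x = true),
      ((univ.filter fun y => d y ≠ d x).card : ℚ) ^ 2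
      = (T.card : ℚ) * ((k : ℚ) - T.card) ^ 2 := by
    rw [sum_congr rfl (fun x hx => by rw [h1 x (by simpa using hx)]), sum_const, ← hT,
      nsmul_eq_mul, Nat.cast_sub ht]
  have e2 : ∑ x ∈ univ.filter (fun x => ¬ d x = true),
      ((univ.filter fun y => d y ≠ d x).card : ℚ) ^ 2
      = ((k : ℚ) - T.card) * (T.card : ℚ) ^ 2 := by
    have hcard : (univ.filter (fun x : Fin k => ¬ d x = true)).card = k - T.card := by
      rw [filter_not, card_sdiff_of_subset (filter_subset _ _), ← hT]
      simp
    rw [sum_congr rfl (fun x hx => by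
        rw [h2 x (by simpa using (mem_filter.1 hx).2)]), sum_const, hcard,
      nsmul_eq_mul, Nat.cast_sub ht]
  rw [e1, e2]
  have h0 : (0 : ℚ) ≤ (T.card : ℚ) := Nat.cast_nonneg _
  have hk : (T.card : ℚ) ≤ (k : ℚ) := by exact_mod_cast ht
  nlinarith [mul_nonneg (le_trans h0 hk) (sq_nonneg ((k : ℚ) - 2 * T.card))]

/-- For any 2-coloring of the edges of `K_{m,n}`, the number of alternating paths of length 3
(counted as vertex sequences `x₁ - u - x₂ - v` with `x₁, x₂` in the class of size `n` and
`u, v` in the class of size `m`, one per path) is at most `m²n²/4`. -/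
theorem stmt10 (m n : ℕ) (c : Fin m → Fin n → Bool) :
    ((Finset.univ.filter (fun q : Fin n × Fin m × Fin n × Fin m =>
        q.1 ≠ q.2.2.1 ∧ q.2.1 ≠ q.2.2.2 ∧
        c q.2.1 q.1 ≠ c q.2.1 q.2.2.1 ∧ c q.2.1 q.2.2.1 ≠ c q.2.2.2 q.2.2.1)).card : ℚ)
      ≤ (m : ℚ) ^ 2 * n ^ 2 / 4 := by
  classical
  set A : Fin m → Fin n → ℕ :=
    fun u x => (univ.filter fun x₁ : Fin n => c u x₁ ≠ c u x).card with hA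
  set B : Fin m → Fin n → ℕ :=
    fun u x => (univ.filter fun v : Fin m => c v x ≠ c u x).card with hB
  have hcount : (univ.filter (fun q : Fin n × Fin m × Fin n × Fin m =>
        q.1 ≠ q.2.2.1 ∧ q.2.1 ≠ q.2.2.2 ∧
        c q.2.1 q.1 ≠ c q.2.1 q.2.2.1 ∧ c q.2.1 q.2.2.1 ≠ c q.2.2.2 q.2.2.1)).card
      = ∑ u : Fin m, ∑ x : Fin n, A u x * B u x := by
    rw [Finset.card_filter]
    rw [Fintype.sum_prod_type]
    simp only [Fintype.sum_prod_type]
    rw [Finset.sum_comm]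
    refine Finset.sum_congr rfl fun u _ => ?_
    rw [Finset.sum_comm]
    refine Finset.sum_congr rfl fun x _ => ?_
    rw [hA, hB]
    simp only [Finset.card_filter]
    rw [Finset.sum_mul_sum]
    refine Finset.sum_congr rfl fun x₁ _ => Finset.sum_congr rfl fun v _ => ?_
    have hiff : (x₁ ≠ x ∧ u ≠ v ∧ c u x₁ ≠ c u x ∧ c u x ≠ c v x)
        ↔ ((c u x₁ ≠ c u x) ∧ (c v x ≠ c u x)) := by
      constructor
      · rintro ⟨_, _, h3, h4⟩
        exact ⟨h3, fun e => h4 e.symm⟩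
      · rintro ⟨h3, h4⟩
        exact ⟨fun e => h3 (by rw [e]), fun e => h4 (by rw [e]), h3, fun e => h4 e.symm⟩
    rw [if_congr hiff rfl rfl]
    by_cases p : c u x₁ ≠ c u x <;> by_cases q : c v x ≠ c u x <;> simp [p, q]
  rw [hcount]
  push_cast
  have hS1 : ∑ u : Fin m, ∑ x : Fin n, (A u x : ℚ) ^ 2 ≤ (m : ℚ) * ((n : ℚ) ^ 3 / 4) := by
    calc ∑ u : Fin m, ∑ x : Fin n, (A u x : ℚ) ^ 2
        ≤ ∑ _u : Fin m, ((n : ℚ) ^ 3 / 4) :=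
          Finset.sum_le_sum fun u _ => stmt10_sqsum (c u)
      _ = (m : ℚ) * ((n : ℚ) ^ 3 / 4) := by simp [mul_comm]
  have hS2 : ∑ u : Fin m, ∑ x : Fin n, (B u x : ℚ) ^ 2 ≤ (n : ℚ) * ((m : ℚ) ^ 3 / 4) := by
    rw [Finset.sum_comm]
    calc ∑ x : Fin n, ∑ u : Fin m, (B u x : ℚ) ^ 2
        ≤ ∑ _x : Fin n, ((m : ℚ) ^ 3 / 4) :=
          Finset.sum_le_sum fun x _ => stmt10_sqsum (fun v => c v x)
      _ = (n : ℚ) * ((m : ℚ) ^ 3 / 4) := by simp [mul_comm]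
  have hCS : (∑ u : Fin m, ∑ x : Fin n, (A u x : ℚ) * (B u x : ℚ)) ^ 2
      ≤ (∑ u : Fin m, ∑ x : Fin n, (A u x : ℚ) ^ 2) *
        (∑ u : Fin m, ∑ x : Fin n, (B u x : ℚ) ^ 2) := by
    have := Finset.sum_mul_sq_le_sq_mul_sq (univ : Finset (Fin m × Fin n))
      (fun p => (A p.1 p.2 : ℚ)) (fun p => (B p.1 p.2 : ℚ))
    simpa [Fintype.sum_prod_type] using this
  have hnonneg : (0 : ℚ) ≤ ∑ u : Fin m, ∑ x : Fin n, (A u x : ℚ) * (B u x : ℚ) :=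
    Finset.sum_nonneg fun u _ => Finset.sum_nonneg fun x _ =>
      mul_nonneg (Nat.cast_nonneg _) (Nat.cast_nonneg _)
  have hm : (0 : ℚ) ≤ (m : ℚ) := Nat.cast_nonneg _
  have hn : (0 : ℚ) ≤ (n : ℚ) := Nat.cast_nonneg _
  nlinarith [hCS, hS1, hS2, hnonneg, mul_nonneg (mul_nonneg hm hm) (mul_nonneg hn hn),
    Finset.sum_nonneg (fun u (_ : u ∈ (univ : Finset (Fin m))) =>
      Finset.sum_nonneg fun x (_ : x ∈ (univ : Finset (Fin n))) => sq_nonneg (A u x : ℚ)),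
    Finset.sum_nonneg (fun u (_ : u ∈ (univ : Finset (Fin m))) =>
      Finset.sum_nonneg fun x (_ : x ∈ (univ : Finset (Fin n))) => sq_nonneg (B u x : ℚ))]
end

section
/- For any 2-coloring of the edges of K_{m,n}, the number of alternating walks of length 4 of the form x₁−u−x₂−v−x₃ with u < v in the class of size m and x₁, x₂, x₃ in the class of size n (not required to be distinct) is at most m²n³/16. Consequently the number of alternating paths of length 4 with both endpoints in the class of size n is at most m²n³/16. -/
open Finset


lemma count_eq (m n : ℕ) (c : Fin m → Fin n → Bool) :
    ((Finset.univ.filter (fun q : Fin m × Fin m × Fin n × Fin n × Fin n =>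
        q.1 < q.2.1 ∧
        c q.1 q.2.2.1 ≠ c q.1 q.2.2.2.1 ∧
        c q.1 q.2.2.2.1 ≠ c q.2.1 q.2.2.2.1 ∧
        c q.2.1 q.2.2.2.1 ≠ c q.2.1 q.2.2.2.2)).card)
    = ∑ u : Fin m, ∑ v : Fin m, ∑ x : Fin n,
        if u < v ∧ c u x ≠ c v x then
          (univ.filter (fun y => c u y ≠ c u x)).card *
          (univ.filter (fun y => c v y ≠ c v x)).card
        else 0 := by
  rw [Finset.card_filter]
  simp only [Fintype.sum_prod_type]
  refine Finset.sum_congr rfl fun u _ => Finset.sum_congr rfl fun v _ => ?_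
  rw [Finset.sum_comm]
  refine Finset.sum_congr rfl fun x _ => ?_
  by_cases h : u < v ∧ c u x ≠ c v x
  · rw [if_pos h]
    have he : ∀ x₁ x₃ : Fin n,
        (if u < v ∧ c u x₁ ≠ c u x ∧ c u x ≠ c v x ∧ c v x ≠ c v x₃ then (1:ℕ) else 0)
        = (if c u x₁ ≠ c u x then 1 else 0) * (if c v x₃ ≠ c v x then 1 else 0) := by
      intro x₁ x₃
      have h2' := h.2
      by_cases h1 : c u x₁ ≠ c u x <;> by_cases h2 : c v x₃ ≠ c v x <;>
        simp_all [eq_comm, ne_comm]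
    simp only [he]
    rw [← Finset.sum_mul_sum]
    simp [Finset.sum_boole, Finset.card_filter]
  · rw [if_neg h]
    refine Finset.sum_eq_zero fun x₁ _ => Finset.sum_eq_zero fun x₃ _ => ?_
    rw [if_neg]
    tauto


lemma pair_sum (m : ℕ) (t : Fin m → Bool) (g : Fin m → ℕ) :
    ∑ u : Fin m, ∑ v : Fin m, (if u < v ∧ t u ≠ t v then g u * g v else 0)
    = (∑ u ∈ univ.filter (fun u => t u = true), g u) *
      (∑ u ∈ univ.filter (fun u => ¬ t u = true), g u) := by
  rw [Finset.sum_mul_sum]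
  conv_lhs => rw [← Finset.sum_product', ← Finset.sum_filter]
  conv_rhs => rw [← Finset.sum_product']
  refine Finset.sum_nbij' (i := fun p => if t p.1 then p else (p.2, p.1))
    (j := fun q => if q.1 < q.2 then q else (q.2, q.1)) ?_ ?_ ?_ ?_ ?_
  · rintro ⟨u, v⟩ hp
    simp only [Finset.mem_filter, Finset.mem_product] at hp ⊢
    obtain ⟨-, huv, hne⟩ := hp
    by_cases ht : t u
    · have : t v = false := by revert hne ht; cases t u <;> cases t v <;> simp
      simp [ht, this]
    · have hu : t u = false := by revert ht; cases t u <;> simp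
      have hv : t v = true := by revert hne hu; cases t u <;> cases t v <;> simp
      simp [ht, hu, hv]
  · rintro ⟨a, b⟩ hq
    simp only [Finset.mem_filter, Finset.mem_product, Finset.mem_univ, true_and] at hq ⊢
    obtain ⟨ha, hb⟩ := hq
    have hab : a ≠ b := by intro h; rw [h] at ha; exact hb ha
    have hne : t a ≠ t b := by rw [ha]; exact fun hh => hb hh.symm
    rcases lt_or_gt_of_ne hab with h | h
    · simp [h, hne]
    · have : t b ≠ t a := fun hh => hne hh.symm
      simp [not_lt_of_gt h, h, this]
  · rintro ⟨u, v⟩ hp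
    simp only [Finset.mem_filter, Finset.mem_product] at hp
    obtain ⟨-, huv, hne⟩ := hp
    by_cases ht : t u
    · simp [ht, huv]
    · simp [ht, not_lt_of_gt huv]
  · rintro ⟨a, b⟩ hq
    simp only [Finset.mem_filter, Finset.mem_product, Finset.mem_univ, true_and] at hq
    obtain ⟨ha, hb⟩ := hq
    have hab : a ≠ b := by intro h; rw [h] at ha; exact hb ha
    rcases lt_or_gt_of_ne hab with h | h
    · simp [h, ha]
    · simp [not_lt_of_gt h, h, hb]
  · rintro ⟨u, v⟩ hp
    by_cases ht : t u <;> simp [ht, mul_comm]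


lemma deg_sum (n : ℕ) (d : Fin n → Bool) :
    ∑ x : Fin n, ((univ.filter (fun y => d y ≠ d x)).card : ℚ)^2 ≤ (n:ℚ)^3/4 := by
  set r := (univ.filter (fun y => d y = true)).card with hr
  set b := (univ.filter (fun y => d y = false)).card with hb
  have hrb : r + b = n := by
    rw [hr, hb]
    have := Finset.card_filter_add_card_filter_not (s := (univ : Finset (Fin n)))
      (p := fun y => d y = true)
    simp only [Finset.card_univ, Fintype.card_fin] at this
    convert this using 2
    · simp
  have hT : ∀ x : Fin n, d x = true →
      (univ.filter (fun y => d y ≠ d x)) = univ.filter (fun y => d y = false) := by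
    intro x hx; apply Finset.filter_congr; intro y _; simp [hx]
  have hF : ∀ x : Fin n, d x = false →
      (univ.filter (fun y => d y ≠ d x)) = univ.filter (fun y => d y = true) := by
    intro x hx; apply Finset.filter_congr; intro y _; simp [hx]
  have hsplit := Finset.sum_filter_add_sum_filter_not (univ : Finset (Fin n))
    (fun x => d x = true) (fun x => ((univ.filter (fun y => d y ≠ d x)).card : ℚ)^2)
  rw [← hsplit]
  have e1 : ∑ x ∈ univ.filter (fun x => d x = true),
      ((univ.filter (fun y => d y ≠ d x)).card : ℚ)^2 = r * (b:ℚ)^2 := by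
    rw [Finset.sum_congr rfl (fun x hx => by
      rw [hT x (by simpa using (Finset.mem_filter.mp hx).2)])]
    rw [Finset.sum_const, nsmul_eq_mul]
  have e2 : ∑ x ∈ univ.filter (fun x => ¬ d x = true),
      ((univ.filter (fun y => d y ≠ d x)).card : ℚ)^2 = b * (r:ℚ)^2 := by
    have : univ.filter (fun x => ¬ d x = true) = univ.filter (fun x => d x = false) := by
      apply Finset.filter_congr; intro y _; simp
    rw [this]
    rw [Finset.sum_congr rfl (fun x hx => by
      rw [hF x (by simpa using (Finset.mem_filter.mp hx).2)])]
    rw [Finset.sum_const, nsmul_eq_mul]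
  rw [e1, e2]
  have hrbQ : (r:ℚ) + b = n := by exact_mod_cast hrb
  rw [← hrbQ]
  nlinarith [mul_nonneg (add_nonneg (Nat.cast_nonneg (α := ℚ) r) (Nat.cast_nonneg (α := ℚ) b))
    (sq_nonneg ((r:ℚ) - b))]

/-- For any 2-coloring of `K_{m,n}`, the number of alternating walks `x₁ - u - x₂ - v - x₃`
of length 4 with `u < v` in the class of size `m` and `x₁, x₂, x₃` in the class of size `n`
(not required to be distinct) is at most `m²n³/16`; consequently the same bound holds for
alternating paths of length 4 with both endpoints in the class of size `n`. -/

theorem stmt11 (m n : ℕ) (c : Fin m → Fin n → Bool) :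
    ((Finset.univ.filter (fun q : Fin m × Fin m × Fin n × Fin n × Fin n =>
        q.1 < q.2.1 ∧
        c q.1 q.2.2.1 ≠ c q.1 q.2.2.2.1 ∧
        c q.1 q.2.2.2.1 ≠ c q.2.1 q.2.2.2.1 ∧
        c q.2.1 q.2.2.2.1 ≠ c q.2.1 q.2.2.2.2)).card : ℚ)
      ≤ (m : ℚ) ^ 2 * n ^ 3 / 16
    ∧ ((Finset.univ.filter (fun q : Fin m × Fin m × Fin n × Fin n × Fin n =>
        q.1 < q.2.1 ∧
        q.2.2.1 ≠ q.2.2.2.1 ∧ q.2.2.2.1 ≠ q.2.2.2.2 ∧ q.2.2.1 ≠ q.2.2.2.2 ∧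
        c q.1 q.2.2.1 ≠ c q.1 q.2.2.2.1 ∧
        c q.1 q.2.2.2.1 ≠ c q.2.1 q.2.2.2.1 ∧
        c q.2.1 q.2.2.2.1 ≠ c q.2.1 q.2.2.2.2)).card : ℚ)
      ≤ (m : ℚ) ^ 2 * n ^ 3 / 16 := by
  set g : Fin m → Fin n → ℕ := fun u x => (univ.filter (fun y => c u y ≠ c u x)).card with hg
  have hN : ((Finset.univ.filter (fun q : Fin m × Fin m × Fin n × Fin n × Fin n =>
        q.1 < q.2.1 ∧
        c q.1 q.2.2.1 ≠ c q.1 q.2.2.2.1 ∧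
        c q.1 q.2.2.2.1 ≠ c q.2.1 q.2.2.2.1 ∧
        c q.2.1 q.2.2.2.1 ≠ c q.2.1 q.2.2.2.2)).card)
      = ∑ x : Fin n,
          (∑ u ∈ univ.filter (fun u => c u x = true), g u x) *
          (∑ u ∈ univ.filter (fun u => ¬ c u x = true), g u x) := by
    rw [count_eq m n c]
    have hswap : (∑ u : Fin m, ∑ v : Fin m, ∑ x : Fin n,
        if u < v ∧ c u x ≠ c v x then g u x * g v x else 0)
      = ∑ x : Fin n, ∑ u : Fin m, ∑ v : Fin m,
        if u < v ∧ c u x ≠ c v x then g u x * g v x else 0 := by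
      have h1 : ∀ u : Fin m, (∑ v : Fin m, ∑ x : Fin n,
          if u < v ∧ c u x ≠ c v x then g u x * g v x else 0)
        = ∑ x : Fin n, ∑ v : Fin m,
          if u < v ∧ c u x ≠ c v x then g u x * g v x else 0 := fun u => Finset.sum_comm
      rw [Finset.sum_congr rfl fun u _ => h1 u]
      exact Finset.sum_comm
    rw [hswap]
    exact Finset.sum_congr rfl fun x _ => pair_sum m (fun u => c u x) (fun u => g u x)
  have main : ((Finset.univ.filter (fun q : Fin m × Fin m × Fin n × Fin n × Fin n =>
        q.1 < q.2.1 ∧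
        c q.1 q.2.2.1 ≠ c q.1 q.2.2.2.1 ∧
        c q.1 q.2.2.2.1 ≠ c q.2.1 q.2.2.2.1 ∧
        c q.2.1 q.2.2.2.1 ≠ c q.2.1 q.2.2.2.2)).card : ℚ)
      ≤ (m : ℚ) ^ 2 * n ^ 3 / 16 := by
    rw [hN]
    push_cast
    have step1 : ∀ x : Fin n,
        (∑ u ∈ univ.filter (fun u => c u x = true), (g u x : ℚ)) *
        (∑ u ∈ univ.filter (fun u => ¬ c u x = true), (g u x : ℚ))
        ≤ (m:ℚ) * (∑ u : Fin m, (g u x : ℚ)^2) / 4 := by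
      intro x
      have h1 : (∑ u ∈ univ.filter (fun u => c u x = true), (g u x : ℚ))
          + (∑ u ∈ univ.filter (fun u => ¬ c u x = true), (g u x : ℚ))
          = ∑ u : Fin m, (g u x : ℚ) :=
        Finset.sum_filter_add_sum_filter_not _ _ _
      have h2 : (∑ u : Fin m, (g u x : ℚ))^2 ≤ (m:ℚ) * ∑ u : Fin m, (g u x : ℚ)^2 := by
        have := sq_sum_le_card_mul_sum_sq (s := (univ : Finset (Fin m)))
          (f := fun u => (g u x : ℚ))
        simpa using this
      have hA : (0:ℚ) ≤ ∑ u ∈ univ.filter (fun u => c u x = true), (g u x : ℚ) :=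
        Finset.sum_nonneg fun _ _ => by positivity
      have hB : (0:ℚ) ≤ ∑ u ∈ univ.filter (fun u => ¬ c u x = true), (g u x : ℚ) :=
        Finset.sum_nonneg fun _ _ => by positivity
      nlinarith [sq_nonneg ((∑ u ∈ univ.filter (fun u => c u x = true), (g u x : ℚ))
        - (∑ u ∈ univ.filter (fun u => ¬ c u x = true), (g u x : ℚ)))]
    calc ∑ x : Fin n,
          (∑ u ∈ univ.filter (fun u => c u x = true), (g u x : ℚ)) *
          (∑ u ∈ univ.filter (fun u => ¬ c u x = true), (g u x : ℚ))
        ≤ ∑ x : Fin n, (m:ℚ) * (∑ u : Fin m, (g u x : ℚ)^2) / 4 :=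
          Finset.sum_le_sum fun x _ => step1 x
      _ = (m:ℚ)/4 * ∑ u : Fin m, ∑ x : Fin n, (g u x : ℚ)^2 := by
          rw [Finset.sum_comm]
          rw [Finset.mul_sum]
          exact Finset.sum_congr rfl fun x _ => by ring
      _ ≤ (m:ℚ)/4 * ∑ u : Fin m, (n:ℚ)^3/4 := by
          have h4 : (0:ℚ) ≤ (m:ℚ)/4 := by positivity
          exact mul_le_mul_of_nonneg_left
            (Finset.sum_le_sum fun u _ => deg_sum n (c u)) h4
      _ ≤ (m : ℚ) ^ 2 * n ^ 3 / 16 := by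
          rw [Finset.sum_const]
          simp only [Finset.card_univ, Fintype.card_fin, nsmul_eq_mul]
          ring_nf
          norm_num
  refine ⟨main, le_trans ?_ main⟩
  have hsub : (Finset.univ.filter (fun q : Fin m × Fin m × Fin n × Fin n × Fin n =>
        q.1 < q.2.1 ∧
        q.2.2.1 ≠ q.2.2.2.1 ∧ q.2.2.2.1 ≠ q.2.2.2.2 ∧ q.2.2.1 ≠ q.2.2.2.2 ∧
        c q.1 q.2.2.1 ≠ c q.1 q.2.2.2.1 ∧
        c q.1 q.2.2.2.1 ≠ c q.2.1 q.2.2.2.1 ∧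
        c q.2.1 q.2.2.2.1 ≠ c q.2.1 q.2.2.2.2))
      ⊆ (Finset.univ.filter (fun q : Fin m × Fin m × Fin n × Fin n × Fin n =>
        q.1 < q.2.1 ∧
        c q.1 q.2.2.1 ≠ c q.1 q.2.2.2.1 ∧
        c q.1 q.2.2.2.1 ≠ c q.2.1 q.2.2.2.1 ∧
        c q.2.1 q.2.2.2.1 ≠ c q.2.1 q.2.2.2.2)) := by
    intro q hq
    simp only [Finset.mem_filter] at hq ⊢
    exact ⟨hq.1, hq.2.1, hq.2.2.2.2.2.1, hq.2.2.2.2.2.2.1, hq.2.2.2.2.2.2.2⟩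
  exact_mod_cast Nat.cast_le.mpr (Finset.card_le_card hsub)
end

section
/- For every 2-coloring of K_{m,n} there exist two distinct vertices in different classes joined by at most mn/4 alternating paths of length 3; that is, λ₃(m,n) ≤ mn/4. -/
/-!
Double counting: summed over all endpoint pairs `(v, x)`, each middle edge `uy` is counted once
for each of the `A(u,y)` vertices `x` with `c u x ≠ c u y` and each of the `B(u,y)` vertices `v`
with `c v y ≠ c u y`, so the total number of alternating paths is `∑ A(u,y) B(u,y)`. A row with `t` edges of one color and `s` of the other
has `∑_y A² = t s (t + s) ≤ n³/4`, and likewise `∑_u B² ≤ m³/4` in every column. Summing the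
weighted AM-GM inequality `2 m n A B ≤ (m A)² + (n B)²` bounds the total by `m² n² / 4`, so some
pair of endpoints is joined by at most the average `m n / 4` paths.
-/

open Finset

section Counting

variable {α β : Type*} [Fintype α] [Fintype β]

def disagreeCount (f : β → Bool) (y : β) : ℕ := #{x | f x ≠ f y}

lemma four_mul_sum_disagreeCount_sq_le (f : β → Bool) :
    4 * ∑ y, disagreeCount f y ^ 2 ≤ Fintype.card β ^ 3 := by
  set N : Bool → ℕ := fun b => #{x | f x = b}
  have hN : N true + N false = Fintype.card β := by
    simpa [N] using card_filter_add_card_filter_not (s := univ) (fun x => f x = true)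
  have hsum : ∑ y, disagreeCount f y ^ 2 = N true * N false * (N true + N false) := by
    have hy : ∀ y, disagreeCount f y = N (!f y) := fun y => by
      simp only [disagreeCount, N, Bool.eq_not_iff.symm]
    simp_rw [hy]
    rw [← sum_fiberwise' univ f (fun b => N (!b) ^ 2)]
    simp only [sum_const, smul_eq_mul, Fintype.sum_bool, Bool.not_true, Bool.not_false]
    ring
  calc 4 * ∑ y, disagreeCount f y ^ 2
      = 4 * N true * N false * (N true + N false) := by rw [hsum]; ring
    _ ≤ (N true + N false) ^ 2 * (N true + N false) :=
        Nat.mul_le_mul_right _ (four_mul_le_sq_add _ _)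
    _ = Fintype.card β ^ 3 := by rw [hN]; ring

def altPathCount [DecidableEq α] [DecidableEq β] (c : α → β → Bool) (v : α) (x : β) : ℕ :=
  #{q : α × β | q.1 ≠ v ∧ q.2 ≠ x ∧ c q.1 x ≠ c q.1 q.2 ∧ c q.1 q.2 ≠ c v q.2}

lemma card_filter_alternating_eq_disagreeCount_mul (c : α → β → Bool) (u : α) (y : β) :
    #{p : α × β | c u p.2 ≠ c u y ∧ c u y ≠ c p.1 y} =
      disagreeCount (fun v => c v y) u * disagreeCount (c u) y := by
  rw [disagreeCount, disagreeCount, ← card_product, ← univ_product_univ, ← filter_product]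
  congr 1
  ext p
  simp only [mem_filter, mem_product, mem_univ, true_and, ne_comm (a := c u y)]
  exact and_comm

lemma sum_altPathCount [DecidableEq α] [DecidableEq β] (c : α → β → Bool) :
    ∑ p : α × β, altPathCount c p.1 p.2 =
      ∑ q : α × β, disagreeCount (fun v => c v q.2) q.1 * disagreeCount (c q.1) q.2 := by
  -- the color conditions alone already force `u ≠ v` and `y ≠ x`
  have hpath : ∀ p : α × β, altPathCount c p.1 p.2 =
      #{q : α × β | c q.1 p.2 ≠ c q.1 q.2 ∧ c q.1 q.2 ≠ c p.1 q.2} := fun p => by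
    refine congrArg card (filter_congr fun q _ => ⟨fun h => h.2.2, fun h => ?_⟩)
    exact ⟨fun hv => h.2 (by rw [hv]), fun hx => h.1 (by rw [hx]), h⟩
  simp_rw [hpath, ← card_filter_alternating_eq_disagreeCount_mul]
  exact sum_card_bipartiteAbove_eq_sum_card_bipartiteBelow _

lemma four_mul_sum_altPathCount_le [DecidableEq α] [DecidableEq β] [Nonempty α] [Nonempty β]
    (c : α → β → Bool) :
    4 * ∑ p : α × β, altPathCount c p.1 p.2 ≤ (Fintype.card α * Fintype.card β) ^ 2 := by
  set m := Fintype.card α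
  set n := Fintype.card β
  let A : α × β → ℕ := fun q => disagreeCount (c q.1) q.2
  let B : α × β → ℕ := fun q => disagreeCount (fun v => c v q.2) q.1
  have hA : 4 * ∑ q, A q ^ 2 ≤ m * n ^ 3 :=
    calc 4 * ∑ q, A q ^ 2 = ∑ u, 4 * ∑ y, disagreeCount (c u) y ^ 2 := by
          rw [Fintype.sum_prod_type, mul_sum]
      _ ≤ ∑ _u : α, n ^ 3 := sum_le_sum fun u _ => four_mul_sum_disagreeCount_sq_le (c u)
      _ = m * n ^ 3 := by rw [sum_const, card_univ, smul_eq_mul]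
  have hB : 4 * ∑ q, B q ^ 2 ≤ n * m ^ 3 :=
    calc 4 * ∑ q, B q ^ 2 = ∑ y, 4 * ∑ u, disagreeCount (fun v => c v y) u ^ 2 := by
          rw [Fintype.sum_prod_type_right, mul_sum]
      _ ≤ ∑ _y : β, m ^ 3 :=
          sum_le_sum fun y _ => four_mul_sum_disagreeCount_sq_le (fun v => c v y)
      _ = n * m ^ 3 := by rw [sum_const, card_univ, smul_eq_mul]
  have hAB : 2 * (m * n) * ∑ q, B q * A q ≤ m ^ 2 * ∑ q, A q ^ 2 + n ^ 2 * ∑ q, B q ^ 2 := by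
    simp only [mul_sum, ← sum_add_distrib]
    refine sum_le_sum fun q _ => ?_
    linarith [two_mul_le_add_sq (m * A q) (n * B q)]
  have hmn : 0 < 2 * (m * n) := by positivity
  refine Nat.le_of_mul_le_mul_left ?_ hmn
  rw [sum_altPathCount]
  nlinarith

lemma exists_four_mul_altPathCount_le [DecidableEq α] [DecidableEq β] [Nonempty α] [Nonempty β]
    (c : α → β → Bool) :
    ∃ v x, 4 * altPathCount c v x ≤ Fintype.card α * Fintype.card β := by
  have htotal : ∑ p : α × β, 4 * altPathCount c p.1 p.2 ≤
      ∑ _p : α × β, Fintype.card α * Fintype.card β := by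
    rw [← mul_sum, sum_const, card_univ, Fintype.card_prod, smul_eq_mul, ← sq]
    exact four_mul_sum_altPathCount_le c
  obtain ⟨p, -, hp⟩ := exists_le_of_sum_le univ_nonempty htotal
  exact ⟨p.1, p.2, hp⟩

end Counting

/-- For every 2-coloring of `K_{m,n}` there exist two vertices in different classes joined by
at most `mn/4` alternating paths of length 3 (a path `x - u - y - v` from `x` in the class of
size `n` to `v` in the class of size `m`, parametrized by `(u, y)`). -/
theorem stmt12 (m n : ℕ) (hm : 1 ≤ m) (hn : 1 ≤ n) (c : Fin m → Fin n → Bool) :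
    ∃ (v : Fin m) (x : Fin n),
      ((Finset.univ.filter (fun q : Fin m × Fin n =>
          q.1 ≠ v ∧ q.2 ≠ x ∧ c q.1 x ≠ c q.1 q.2 ∧ c q.1 q.2 ≠ c v q.2)).card : ℚ)
        ≤ (m : ℚ) * n / 4 := by
  have : Nonempty (Fin m) := ⟨⟨0, hm⟩⟩
  have : Nonempty (Fin n) := ⟨⟨0, hn⟩⟩
  obtain ⟨v, x, hvx⟩ := exists_four_mul_altPathCount_le c
  have h4 : 4 * altPathCount c v x ≤ m * n := by simpa only [Fintype.card_fin] using hvx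
  refine ⟨v, x, ?_⟩
  rw [le_div_iff₀' four_pos]
  exact_mod_cast h4
end

section
/- Partition the classes of K_{m,n} as M = M₁ ∪ M₂ and N = N₁ ∪ N₂ with |M_i| = m/2 and |N_i| = n/2; color edges between M_i and N_i red and all other edges blue. Then for every u ∈ M and v ∈ N, the number of alternating paths of length 2k+1 from u to v is at least (1+o(1))·(m/2)^k·(n/2)^k. Hence λ_{2k+1}(m,n) ≥ (1+o(1))·(mn/4)^k. -/
/-!
Inside the alternating-path count, the colour of an edge only records whether its endpoints lie
in matching halves, so a path is alternating exactly when its `M`-vertices alternate between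
`M₁` and `M₂` and its `N`-vertices alternate between `N₁` and `N₂`, starting opposite to `u`
and ending opposite to `v`. Prescribing that pattern of halves and filling each half with
distinct vertices (avoiding `u` and `v`) gives `(m'-1)ₖ (n'-1)ₖ` paths, and a falling factorial
`(q-1)ₖ ≥ (q-k)ᵏ ≥ (1 - k²/q) qᵏ` is asymptotically `qᵏ` by Bernoulli's inequality.
-/

/-- The 2-coloring of `K_{2m',2n'}`: edge between `i` and `j` is red (`true`) iff `i` and `j`
lie in matching halves (`M_1`–`N_1` or `M_2`–`N_2`). -/
def bcol (m' n' : ℕ) (i : Fin (2 * m')) (j : Fin (2 * n')) : Bool :=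
  decide ((i : ℕ) < m') == decide ((j : ℕ) < n')

open Filter Function

/-- The alternating paths counted in `stmt13`: `p` encodes the path
`u, p.1 0, p.2 0, p.1 1, …, p.2 (k-1), v` of length `2k+1`. -/
def altPaths (k : ℕ) (hk : 1 ≤ k) (m' n' : ℕ) (u : Fin (2 * m')) (v : Fin (2 * n')) :
    Finset ((Fin k → Fin (2 * n')) × (Fin k → Fin (2 * m'))) :=
  Finset.univ.filter
    (fun p : (Fin k → Fin (2 * n')) × (Fin k → Fin (2 * m')) =>
      Function.Injective p.1 ∧ Function.Injective p.2 ∧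
      (∀ i, p.1 i ≠ v) ∧ (∀ i, p.2 i ≠ u) ∧
      bcol m' n' u (p.1 ⟨0, hk⟩) ≠ bcol m' n' (p.2 ⟨0, hk⟩) (p.1 ⟨0, hk⟩) ∧
      (∀ i : Fin k, ∀ h : (i : ℕ) + 1 < k,
        bcol m' n' (p.2 i) (p.1 i) ≠ bcol m' n' (p.2 i) (p.1 ⟨(i : ℕ) + 1, h⟩) ∧
        bcol m' n' (p.2 i) (p.1 ⟨(i : ℕ) + 1, h⟩)
          ≠ bcol m' n' (p.2 ⟨(i : ℕ) + 1, h⟩) (p.1 ⟨(i : ℕ) + 1, h⟩)) ∧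
      bcol m' n' (p.2 ⟨k - 1, Nat.sub_one_lt_of_lt hk⟩)
          (p.1 ⟨k - 1, Nat.sub_one_lt_of_lt hk⟩) ≠
        bcol m' n' (p.2 ⟨k - 1, Nat.sub_one_lt_of_lt hk⟩) v)

section Halves

variable {q : ℕ}

def lowHalf (q : ℕ) (x : Fin (2 * q)) : Bool := decide ((x : ℕ) < q)

def place (q : ℕ) (b : Bool) (y : Fin q) : Fin (2 * q) :=
  ⟨if b then y else q + y, by split <;> omega⟩

def lowPart (x : Fin (2 * q)) : Fin q :=
  ⟨x % q, Nat.mod_lt _ (by have := x.isLt; omega)⟩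

theorem lowHalf_place (b : Bool) (y : Fin q) : lowHalf q (place q b y) = b := by
  cases b <;> simp [lowHalf, place]

theorem place_inj {b b' : Bool} {y y' : Fin q} :
    place q b y = place q b' y' ↔ b = b' ∧ y = y' := by
  refine ⟨fun h => ?_, fun ⟨rfl, rfl⟩ => rfl⟩
  have hb : b = b' := by simpa only [lowHalf_place] using congrArg (lowHalf q) h
  subst hb
  refine ⟨rfl, Fin.ext ?_⟩
  have := congrArg Fin.val h
  cases b <;> simp_all [place]

theorem place_lowHalf_lowPart (x : Fin (2 * q)) : place q (lowHalf q x) (lowPart x) = x := by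
  ext
  by_cases hx : (x : ℕ) < q
  · simp [place, lowHalf, lowPart, hx, Nat.mod_eq_of_lt hx]
  · have : (x : ℕ) - q < q := by omega
    simp only [place, lowHalf, lowPart, hx, decide_false, Bool.false_eq_true, if_false,
      Nat.mod_eq_sub_mod (le_of_not_gt hx), Nat.mod_eq_of_lt this]
    omega

theorem bcol_ne_bcol_right_iff {m n : ℕ} (i : Fin (2 * m)) (j j' : Fin (2 * n)) :
    bcol m n i j ≠ bcol m n i j' ↔ lowHalf n j ≠ lowHalf n j' := by
  change (lowHalf m i == lowHalf n j) ≠ (lowHalf m i == lowHalf n j') ↔ _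
  cases lowHalf m i <;> cases lowHalf n j <;> cases lowHalf n j' <;> decide

theorem bcol_ne_bcol_left_iff {m n : ℕ} (i i' : Fin (2 * m)) (j : Fin (2 * n)) :
    bcol m n i j ≠ bcol m n i' j ↔ lowHalf m i ≠ lowHalf m i' := by
  change (lowHalf m i == lowHalf n j) ≠ (lowHalf m i' == lowHalf n j) ↔ _
  cases lowHalf m i <;> cases lowHalf m i' <;> cases lowHalf n j <;> decide

end Halves

/-- The halves visited along a path leaving a vertex of half `c`. -/
def altHalf (c : Bool) : ℕ → Bool
  | 0 => !c
  | r + 1 => !altHalf c r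

theorem altHalf_zero_ne (c : Bool) : altHalf c 0 ≠ c := by
  simp [altHalf]

theorem altHalf_succ_ne (c : Bool) (r : ℕ) : altHalf c (r + 1) ≠ altHalf c r := by
  simp [altHalf]

section PlaceAlong

variable {ι : Type*} {q : ℕ} (h : ι → Bool) (w : Fin q)

def placeAlong (f : ι ↪ {y : Fin q // y ≠ w}) (i : ι) : Fin (2 * q) :=
  place q (h i) (f i)

theorem lowHalf_placeAlong (f : ι ↪ {y : Fin q // y ≠ w}) (i : ι) :
    lowHalf q (placeAlong h w f i) = h i :=
  lowHalf_place _ _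

theorem placeAlong_injective (f : ι ↪ {y : Fin q // y ≠ w}) : Injective (placeAlong h w f) :=
  fun _ _ hij => f.injective (Subtype.ext (place_inj.1 hij).2)

theorem injective_placeAlong : Injective (placeAlong h w) :=
  fun _ _ hff => DFunLike.ext _ _ fun i =>
    Subtype.ext (place_inj.1 (congrFun hff i)).2

theorem placeAlong_ne (x : Fin (2 * q)) (f : ι ↪ {y : Fin q // y ≠ lowPart x}) (i : ι) :
    placeAlong h (lowPart x) f i ≠ x := by
  conv_rhs => rw [← place_lowHalf_lowPart x]
  exact fun hx => (f i).2 (place_inj.1 hx).2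

end PlaceAlong

section Count

variable {k m' n' : ℕ} (hk : 1 ≤ k) (u : Fin (2 * m')) (v : Fin (2 * n'))

def alternatingPlacement
    (e : (Fin k ↪ {y : Fin n' // y ≠ lowPart v}) ×
      (Fin k ↪ {x : Fin m' // x ≠ lowPart u})) :
    (Fin k → Fin (2 * n')) × (Fin k → Fin (2 * m')) :=
  (placeAlong (fun i => altHalf (lowHalf n' v) (k - 1 - i)) (lowPart v) e.1,
    placeAlong (fun i => altHalf (lowHalf m' u) i) (lowPart u) e.2)

theorem alternatingPlacement_mem_altPaths (e) :
    alternatingPlacement u v e ∈ altPaths k hk m' n' u v := by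
  simp only [altPaths, alternatingPlacement, Finset.mem_filter, Finset.mem_univ, true_and,
    bcol_ne_bcol_right_iff, bcol_ne_bcol_left_iff, lowHalf_placeAlong]
  refine ⟨placeAlong_injective _ _ _, placeAlong_injective _ _ _, placeAlong_ne _ _ _,
    placeAlong_ne _ _ _, (altHalf_zero_ne _).symm,
    fun i hi => ⟨?_, (altHalf_succ_ne _ _).symm⟩, ?_⟩
  · rw [show k - 1 - i = k - 1 - (i + 1) + 1 by omega]
    exact altHalf_succ_ne _ _
  · rw [show k - 1 - (k - 1) = 0 by omega]
    exact altHalf_zero_ne _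

theorem descFactorial_mul_le_card_altPaths :
    (n' - 1).descFactorial k * (m' - 1).descFactorial k ≤ (altPaths k hk m' n' u v).card := by
  calc (n' - 1).descFactorial k * (m' - 1).descFactorial k
      = Fintype.card ((Fin k ↪ {y : Fin n' // y ≠ lowPart v}) ×
          (Fin k ↪ {x : Fin m' // x ≠ lowPart u})) := by
        simp [Fintype.card_embedding_eq]
    _ ≤ (altPaths k hk m' n' u v).card :=
        Finset.card_le_card_of_injOn _ (fun e _ => alternatingPlacement_mem_altPaths hk u v e)
          (fun e _ e' _ h => Prod.ext (injective_placeAlong _ _ (congrArg Prod.fst h))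
            (injective_placeAlong _ _ (congrArg Prod.snd h)))

end Count

theorem one_sub_sq_div_mul_pow_le (k q : ℕ) (hkq : k ≤ q) :
    (1 - (k : ℝ) ^ 2 / q) * (q : ℝ) ^ k ≤ ((q - k : ℕ) : ℝ) ^ k := by
  rcases Nat.eq_zero_or_pos q with rfl | hq
  · obtain rfl : k = 0 := by omega
    simp
  have hq' : (0 : ℝ) < q := by exact_mod_cast hq
  have hbern : 1 + k * ((1 - k / q) - 1) ≤ (1 - (k : ℝ) / q) ^ k :=
    one_add_mul_sub_le_pow (by
      have : (k : ℝ) / q ≤ 1 := (div_le_one hq').2 (by exact_mod_cast hkq)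
      linarith) k
  calc (1 - (k : ℝ) ^ 2 / q) * (q : ℝ) ^ k
      = (1 + k * ((1 - k / q) - 1)) * (q : ℝ) ^ k := by ring
    _ ≤ (1 - (k : ℝ) / q) ^ k * (q : ℝ) ^ k := by gcongr
    _ = ((q - k : ℕ) : ℝ) ^ k := by
        rw [← mul_pow, Nat.cast_sub hkq]
        field_simp

theorem eventually_le_descFactorial_pred (k : ℕ) {δ : ℝ} (hδ : 0 < δ) :
    ∀ᶠ q : ℕ in atTop, (1 - δ) * (q : ℝ) ^ k ≤ (q - 1).descFactorial k := by
  filter_upwards [tendsto_natCast_atTop_atTop.eventually_ge_atTop ((k : ℝ) ^ 2 / δ),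
    eventually_ge_atTop (k + 1)] with q hq hkq
  have hq' : (0 : ℝ) < q := by exact_mod_cast (by omega : 0 < q)
  calc (1 - δ) * (q : ℝ) ^ k
      ≤ (1 - (k : ℝ) ^ 2 / q) * (q : ℝ) ^ k := by
        gcongr
        rw [div_le_iff₀ hq']
        rwa [div_le_iff₀ hδ, mul_comm] at hq
    _ ≤ ((q - k : ℕ) : ℝ) ^ k := one_sub_sq_div_mul_pow_le k q (by omega)
    _ ≤ (q - 1).descFactorial k := by
        have := Nat.pow_sub_le_descFactorial (q - 1) k
        rw [show q - 1 + 1 - k = q - k by omega] at this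
        exact_mod_cast this

/-- Under the coloring `bcol`, for every `u ∈ M` and `v ∈ N` the number of alternating
paths of length `2k+1` from `u` to `v` is at least `(1 + o(1)) (m/2)^k (n/2)^k`. A path is
encoded by its internal vertices `(a, b)`: vertices `u, a 0, b 0, a 1, b 1, …, a (k-1),
b (k-1), v` in order. -/
theorem stmt13 (k : ℕ) (hk : 1 ≤ k) (ε : ℝ) (hε : 0 < ε) :
    ∃ C : ℕ, ∀ m' n' : ℕ, C ≤ m' → C ≤ n' → m' ≤ n' →
      ∀ (u : Fin (2 * m')) (v : Fin (2 * n')),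
        (1 - ε) * (m' : ℝ) ^ k * (n' : ℝ) ^ k ≤
        ((Finset.univ.filter
          (fun p : (Fin k → Fin (2 * n')) × (Fin k → Fin (2 * m')) =>
            Function.Injective p.1 ∧ Function.Injective p.2 ∧
            (∀ i, p.1 i ≠ v) ∧ (∀ i, p.2 i ≠ u) ∧
            bcol m' n' u (p.1 ⟨0, hk⟩) ≠ bcol m' n' (p.2 ⟨0, hk⟩) (p.1 ⟨0, hk⟩) ∧
            (∀ i : Fin k, ∀ h : (i : ℕ) + 1 < k,
              bcol m' n' (p.2 i) (p.1 i) ≠ bcol m' n' (p.2 i) (p.1 ⟨(i : ℕ) + 1, h⟩) ∧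
              bcol m' n' (p.2 i) (p.1 ⟨(i : ℕ) + 1, h⟩)
                ≠ bcol m' n' (p.2 ⟨(i : ℕ) + 1, h⟩) (p.1 ⟨(i : ℕ) + 1, h⟩)) ∧
            bcol m' n' (p.2 ⟨k - 1, by omega⟩) (p.1 ⟨k - 1, by omega⟩)
              ≠ bcol m' n' (p.2 ⟨k - 1, by omega⟩) v)).card : ℝ) := by
  set δ := min (ε / 2) 1
  have hδ : 0 < δ := by positivity
  have hδ1 : 0 ≤ 1 - δ := sub_nonneg.2 (min_le_right _ _)
  have hεδ : 1 - ε ≤ (1 - δ) * (1 - δ) := by nlinarith [min_le_left (ε / 2) 1]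
  obtain ⟨C, hC⟩ := eventually_atTop.1 (eventually_le_descFactorial_pred k hδ)
  refine ⟨C, fun m' n' hm hn _ u v => ?_⟩
  calc (1 - ε) * (m' : ℝ) ^ k * (n' : ℝ) ^ k
      ≤ ((1 - δ) * (1 - δ)) * ((m' : ℝ) ^ k * (n' : ℝ) ^ k) := by
        rw [mul_assoc]; gcongr
    _ = ((1 - δ) * (n' : ℝ) ^ k) * ((1 - δ) * (m' : ℝ) ^ k) := by ring
    _ ≤ (n' - 1).descFactorial k * (m' - 1).descFactorial k :=
        mul_le_mul (hC n' hn) (hC m' hm) (mul_nonneg hδ1 (by positivity)) (by positivity)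
    _ ≤ ((altPaths k hk m' n' u v).card : ℝ) := by
        exact_mod_cast descFactorial_mul_le_card_altPaths hk u v
end

section
/- For every r-edge-coloring of the complete graph K_n, the total number of alternating paths of length 2 is at most ((r-1)/(2r))·(n-1)²·n. Consequently there exist two vertices u, v with at most (1 - 1/r)(n-1) alternating paths of length 2 between them, i.e., κ_{r,2}(K_n) ≤ (1 - 1/r)(n-1). -/
open Finset

/-- Double counting: ordered pairs satisfying a symmetric irreflexive relation
are twice the increasing pairs. -/
lemma double_count_aux {α : Type*} [Fintype α] [LinearOrder α]
    (Q : α → α → Prop) [DecidableRel Q]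
    (hsymm : ∀ a b, Q a b → Q b a) (hirr : ∀ a, ¬ Q a a) :
    (univ.filter (fun p : α × α => Q p.1 p.2)).card
      = 2 * (univ.filter (fun p : α × α => p.1 < p.2 ∧ Q p.1 p.2)).card := by
  have hsplit : univ.filter (fun p : α × α => Q p.1 p.2)
      = (univ.filter (fun p : α × α => p.1 < p.2 ∧ Q p.1 p.2)) ∪
        (univ.filter (fun p : α × α => p.2 < p.1 ∧ Q p.1 p.2)) := by
    ext p
    simp only [mem_filter, mem_union, mem_univ, true_and]
    constructor
    · intro h
      rcases lt_trichotomy p.1 p.2 with h1 | h1 | h1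
      · exact Or.inl ⟨h1, h⟩
      · exact absurd (h1 ▸ h) (hirr p.2)
      · exact Or.inr ⟨h1, h⟩
    · rintro (⟨_, h⟩ | ⟨_, h⟩) <;> exact h
  have hdisj : Disjoint (univ.filter (fun p : α × α => p.1 < p.2 ∧ Q p.1 p.2))
      (univ.filter (fun p : α × α => p.2 < p.1 ∧ Q p.1 p.2)) := by
    rw [disjoint_left]
    intro p hp hq
    simp only [mem_filter] at hp hq
    exact absurd hq.2.1 (not_lt.2 hp.2.1.le)
  have hswap : (univ.filter (fun p : α × α => p.2 < p.1 ∧ Q p.1 p.2)).card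
      = (univ.filter (fun p : α × α => p.1 < p.2 ∧ Q p.1 p.2)).card := by
    apply Finset.card_bij' (fun p _ => Prod.swap p) (fun p _ => Prod.swap p)
    · intro p hp
      simp only [mem_filter, mem_univ, true_and] at hp ⊢
      exact ⟨hp.1, hsymm _ _ hp.2⟩
    · intro p hp
      simp only [mem_filter, mem_univ, true_and] at hp ⊢
      exact ⟨hp.1, hsymm _ _ hp.2⟩
    · intro p _; simp
    · intro p _; simp
  rw [hsplit, card_union_of_disjoint hdisj, hswap]
  ring

lemma middle_bound (n r : ℕ) (hr : 1 ≤ r) (hn : 2 ≤ n) (c : Fin n → Fin n → Fin r) (w : Fin n) :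
    (2 * (univ.filter (fun p : Fin n × Fin n =>
        p.1 < p.2 ∧ w ≠ p.1 ∧ w ≠ p.2 ∧ c p.1 w ≠ c p.2 w)).card : ℚ)
      ≤ ((n : ℚ) - 1) ^ 2 * (1 - 1 / r) := by
  classical
  set S : Finset (Fin n) := univ.erase w with hS
  set d : Fin r → ℕ := fun i => (S.filter (fun v => c v w = i)).card with hd
  have hScard : S.card = n - 1 := by
    rw [hS, card_erase_of_mem (mem_univ w), card_univ, Fintype.card_fin]
  -- ordered count
  have hO : (univ.filter (fun p : Fin n × Fin n =>
        (w ≠ p.1 ∧ w ≠ p.2 ∧ c p.1 w ≠ c p.2 w))).card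
      = 2 * (univ.filter (fun p : Fin n × Fin n =>
        p.1 < p.2 ∧ w ≠ p.1 ∧ w ≠ p.2 ∧ c p.1 w ≠ c p.2 w)).card := by
    apply double_count_aux (fun a b => w ≠ a ∧ w ≠ b ∧ c a w ≠ c b w)
    · rintro a b ⟨h1, h2, h3⟩; exact ⟨h2, h1, h3.symm⟩
    · rintro a ⟨_, _, h⟩; exact h rfl
  have hfil : (univ.filter (fun p : Fin n × Fin n =>
        (w ≠ p.1 ∧ w ≠ p.2 ∧ c p.1 w ≠ c p.2 w)))
      = (S ×ˢ S).filter (fun p => ¬ (c p.1 w = c p.2 w)) := by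
    ext p
    simp only [mem_filter, mem_univ, true_and, mem_product, hS, mem_erase]
    constructor
    · rintro ⟨h1, h2, h3⟩
      refine ⟨⟨?_, ?_⟩, h3⟩ <;> simp [h1.symm, h2.symm]
    · rintro ⟨⟨h1, h2⟩, h3⟩
      exact ⟨h1.1.symm, h2.1.symm, h3⟩
  set E : ℕ := ((S ×ˢ S).filter (fun p => c p.1 w = c p.2 w)).card with hE
  have hEO : E + (univ.filter (fun p : Fin n × Fin n =>
        (w ≠ p.1 ∧ w ≠ p.2 ∧ c p.1 w ≠ c p.2 w))).card = (n - 1) * (n - 1) := by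
    rw [hfil, hE, card_filter_add_card_filter_not, card_product, hScard]
  -- E = sum of squares
  have hEd : E = ∑ i : Fin r, d i * d i := by
    rw [hE, card_filter, Finset.sum_product]
    have h1 : ∀ u ∈ S, (∑ v ∈ S, if c u w = c v w then 1 else 0) = d (c u w) := by
      intro u _
      show _ = (S.filter (fun v => c v w = c u w)).card
      rw [card_filter]
      exact Finset.sum_congr rfl fun v _ => if_congr eq_comm rfl rfl
    rw [Finset.sum_congr rfl h1,
      ← Finset.sum_fiberwise_of_maps_to (g := fun u => c u w) (t := univ)
        (fun u _ => mem_univ _) (fun u => d (c u w))]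
    apply Finset.sum_congr rfl
    intro i _
    have h2 : ∀ u ∈ S.filter (fun u => c u w = i), d (c u w) = d i := by
      intro u hu
      rw [(mem_filter.1 hu).2]
    rw [Finset.sum_congr rfl h2, Finset.sum_const, smul_eq_mul]
  have hsumd : ∑ i : Fin r, d i = n - 1 := by
    rw [← hScard]
    exact (Finset.card_eq_sum_card_fiberwise (f := fun u => c u w)
      (fun u _ => mem_univ _)).symm
  -- Cauchy-Schwarz in ℚ
  have hCS : ((n : ℚ) - 1) ^ 2 ≤ (r : ℚ) * E := by
    have h1 : (∑ i : Fin r, (d i : ℚ)) ^ 2 ≤ (univ : Finset (Fin r)).card *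
        ∑ i : Fin r, (d i : ℚ) ^ 2 := sq_sum_le_card_mul_sum_sq
    have h2 : (∑ i : Fin r, (d i : ℚ)) = (n : ℚ) - 1 := by
      rw [← Nat.cast_sum]
      rw [hsumd]
      push_cast [Nat.cast_sub (by omega : 1 ≤ n)]
      ring
    have h3 : (E : ℚ) = ∑ i : Fin r, (d i : ℚ) ^ 2 := by
      rw [hEd]; push_cast; apply Finset.sum_congr rfl; intro i _; ring
    rw [h2] at h1
    rw [h3]
    simpa using h1
  have hOQ : ((univ.filter (fun p : Fin n × Fin n =>
        (w ≠ p.1 ∧ w ≠ p.2 ∧ c p.1 w ≠ c p.2 w))).card : ℚ)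
      = ((n : ℚ) - 1) ^ 2 - E := by
    have := congrArg (Nat.cast : ℕ → ℚ) hEO
    push_cast [Nat.cast_sub (by omega : 1 ≤ n)] at this
    nlinarith [this]
  have hrq : (0 : ℚ) < r := by exact_mod_cast hr
  rw [← Nat.cast_ofNat, ← Nat.cast_mul, ← hO, hOQ]
  have hdiv : ((n : ℚ) - 1) ^ 2 / r ≤ E := by
    rw [div_le_iff₀ hrq]
    nlinarith [hCS]
  have : ((n:ℚ)-1)^2 * (1 - 1/r) = ((n:ℚ)-1)^2 - ((n:ℚ)-1)^2 / r := by
    field_simp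
  rw [this]
  linarith

/-- For every `r`-edge-coloring of `K_n`, the total number of alternating paths of length 2
(triples `(u, w, v)` with `u < v`, middle vertex `w ∉ {u,v}`, and `c(uw) ≠ c(vw)`) is at most
`((r-1)/(2r))(n-1)² n`, and consequently some pair of distinct vertices is joined by at most
`(1 - 1/r)(n-1)` alternating paths of length 2. -/
theorem stmt14 (n r : ℕ) (hr : 1 ≤ r) (hn : 2 ≤ n) (c : Fin n → Fin n → Fin r)
    (hsym : ∀ u v, c u v = c v u) :
    ((Finset.univ.filter (fun q : Fin n × Fin n × Fin n =>
        q.1 < q.2.2 ∧ q.2.1 ≠ q.1 ∧ q.2.1 ≠ q.2.2 ∧ c q.1 q.2.1 ≠ c q.2.2 q.2.1)).card : ℚ)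
      ≤ ((r : ℚ) - 1) / (2 * r) * ((n : ℚ) - 1) ^ 2 * n
    ∧ ∃ u v : Fin n, u ≠ v ∧
        ((Finset.univ.filter (fun w : Fin n => w ≠ u ∧ w ≠ v ∧ c u w ≠ c v w)).card : ℚ)
          ≤ (1 - 1 / (r : ℚ)) * ((n : ℚ) - 1) := by
  classical
  set T := (Finset.univ.filter (fun q : Fin n × Fin n × Fin n =>
        q.1 < q.2.2 ∧ q.2.1 ≠ q.1 ∧ q.2.1 ≠ q.2.2 ∧ c q.1 q.2.1 ≠ c q.2.2 q.2.1)).card with hTdef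
  have hrq : (0 : ℚ) < r := by exact_mod_cast hr
  have hTsum : T = ∑ u : Fin n, ∑ w : Fin n, ∑ v : Fin n,
      if (u < v ∧ w ≠ u ∧ w ≠ v ∧ c u w ≠ c v w) then 1 else 0 := by
    rw [hTdef, card_filter]
    simp only [Fintype.sum_prod_type]
  -- decomposition by middle vertex
  have hTmid : T = ∑ w : Fin n, (univ.filter (fun p : Fin n × Fin n =>
      p.1 < p.2 ∧ w ≠ p.1 ∧ w ≠ p.2 ∧ c p.1 w ≠ c p.2 w)).card := by
    rw [hTsum, Finset.sum_comm]
    apply Finset.sum_congr rfl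
    intro w _
    rw [card_filter]
    simp only [Fintype.sum_prod_type]
  -- part 1
  have part1 : (T : ℚ) ≤ ((r : ℚ) - 1) / (2 * r) * ((n : ℚ) - 1) ^ 2 * n := by
    have h1 : 2 * (T : ℚ) ≤ ∑ _w : Fin n, ((n : ℚ) - 1) ^ 2 * (1 - 1 / r) := by
      rw [hTmid]
      push_cast
      rw [Finset.mul_sum]
      exact Finset.sum_le_sum fun w _ => middle_bound n r hr hn c w
    rw [Finset.sum_const, card_univ, Fintype.card_fin, nsmul_eq_mul] at h1
    have h2 : ((r : ℚ) - 1) / (2 * r) * ((n : ℚ) - 1) ^ 2 * n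
        = (n : ℚ) * (((n : ℚ) - 1) ^ 2 * (1 - 1 / r)) / 2 := by
      field_simp
    rw [h2]
    linarith
  refine ⟨part1, ?_⟩
  -- decomposition by pair
  set pairs := univ.filter (fun p : Fin n × Fin n => p.1 < p.2) with hpairsdef
  have hTpairs : T = ∑ p ∈ pairs, (univ.filter
      (fun w : Fin n => w ≠ p.1 ∧ w ≠ p.2 ∧ c p.1 w ≠ c p.2 w)).card := by
    rw [hTsum, hpairsdef, Finset.sum_filter]
    simp only [Fintype.sum_prod_type]
    apply Finset.sum_congr rfl
    intro u _
    rw [Finset.sum_comm]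
    apply Finset.sum_congr rfl
    intro v _
    by_cases h : u < v
    · rw [if_pos h, card_filter]
      exact Finset.sum_congr rfl fun w _ => if_congr (and_iff_right h) rfl rfl
    · rw [if_neg h]
      exact Finset.sum_eq_zero fun w _ => if_neg fun hc => h hc.1
  -- number of pairs
  have hpairs_card : 2 * pairs.card = n * n - n := by
    have h1 : (univ.filter (fun p : Fin n × Fin n => p.1 ≠ p.2)).card
        = 2 * (univ.filter (fun p : Fin n × Fin n => p.1 < p.2 ∧ p.1 ≠ p.2)).card :=
      double_count_aux (fun a b => a ≠ b) (fun _ _ h => h.symm) (fun _ h => h rfl)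
    have h2 : (univ.filter (fun p : Fin n × Fin n => p.1 < p.2 ∧ p.1 ≠ p.2)) = pairs := by
      ext p
      simp only [hpairsdef, mem_filter, mem_univ, true_and]
      exact ⟨And.left, fun h => ⟨h, ne_of_lt h⟩⟩
    have h3 : (univ.filter (fun p : Fin n × Fin n => p.1 ≠ p.2))
        = (univ : Finset (Fin n)).offDiag := by
      ext p
      simp [Finset.mem_offDiag]
    rw [h2] at h1
    rw [h3, Finset.offDiag_card, card_univ, Fintype.card_fin] at h1
    omega
  have hpc : (pairs.card : ℚ) = ((n : ℚ) * n - n) / 2 := by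
    have h := congrArg (Nat.cast : ℕ → ℚ) hpairs_card
    push_cast [Nat.cast_sub (by nlinarith : n ≤ n * n)] at h
    linarith
  by_contra hcon
  push_neg at hcon
  have hne : pairs.Nonempty := by
    refine ⟨(⟨0, by omega⟩, ⟨1, by omega⟩), mem_filter.2 ⟨mem_univ _, ?_⟩⟩
    exact Fin.mk_lt_mk.2 one_pos
  have hlt : ∑ _p ∈ pairs, ((1 : ℚ) - 1 / r) * ((n : ℚ) - 1)
      < ∑ p ∈ pairs, ((univ.filter
        (fun w : Fin n => w ≠ p.1 ∧ w ≠ p.2 ∧ c p.1 w ≠ c p.2 w)).card : ℚ) := by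
    apply Finset.sum_lt_sum_of_nonempty hne
    intro p hp
    have hplt : p.1 < p.2 := (mem_filter.1 hp).2
    exact hcon p.1 p.2 (ne_of_lt hplt)
  rw [Finset.sum_const, nsmul_eq_mul] at hlt
  have hTcast : (T : ℚ) = ∑ p ∈ pairs, ((univ.filter
      (fun w : Fin n => w ≠ p.1 ∧ w ≠ p.2 ∧ c p.1 w ≠ c p.2 w)).card : ℚ) := by
    rw [hTpairs]
    push_cast
    rfl
  have heq : (pairs.card : ℚ) * ((1 - 1 / (r : ℚ)) * ((n : ℚ) - 1))
      = ((r : ℚ) - 1) / (2 * r) * ((n : ℚ) - 1) ^ 2 * n := by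
    rw [hpc]
    field_simp
  rw [← hTcast] at hlt
  linarith
end

section
/- Let u < v be vertices in the class of size m of a 2-colored K_{m,n}, and set c = codeg_{RB}(u,v) + codeg_{BR}(u,v). Then deg_R(u)·codeg_{BR}(u,v)·deg_B(v) + deg_B(u)·codeg_{RB}(u,v)·deg_R(v) ≤ c·n²/4. -/
lemma stmt19_split {n : ℕ} (p : Fin n → Bool) :
    (Finset.univ.filter (fun w => p w = true)).card
      + (Finset.univ.filter (fun w => p w = false)).card = n := by
  have := Finset.card_filter_add_card_filter_not
    (s := (Finset.univ : Finset (Fin n))) (p := fun w => p w = true)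
  simpa [Bool.not_eq_true] using this

/-- For `u < v` in the class of size `m` of a 2-colored `K_{m,n}` (`true` = blue, `false` =
red), with `c = codeg_{RB}(u,v) + codeg_{BR}(u,v)`:
`deg_R(u)·codeg_{BR}(u,v)·deg_B(v) + deg_B(u)·codeg_{RB}(u,v)·deg_R(v) ≤ c·n²/4`. -/
theorem stmt19 (m n : ℕ) (col : Fin m → Fin n → Bool) (u v : Fin m) (huv : u < v)
    (dB dR : Fin m → ℚ) (coBR coRB : ℚ)
    (hdB : ∀ x, dB x = ((Finset.univ.filter (fun w : Fin n => col x w = true)).card : ℚ))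
    (hdR : ∀ x, dR x = ((Finset.univ.filter (fun w : Fin n => col x w = false)).card : ℚ))
    (hBR : coBR =
      ((Finset.univ.filter (fun w : Fin n => col u w = true ∧ col v w = false)).card : ℚ))
    (hRB : coRB =
      ((Finset.univ.filter (fun w : Fin n => col u w = false ∧ col v w = true)).card : ℚ)) :
    dR u * coBR * dB v + dB u * coRB * dR v ≤ (coRB + coBR) * n ^ 2 / 4 := by
  -- dB x + dR x = n
  have hsum : ∀ x, dB x + dR x = n := by
    intro x
    rw [hdB, hdR]
    have := stmt19_split (fun w => col x w)
    exact_mod_cast congrArg (Nat.cast : ℕ → ℚ) this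
  -- split dB u by color of v
  have hBu : (Finset.univ.filter (fun w : Fin n => col u w = true)).card
      = (Finset.univ.filter (fun w : Fin n => col u w = true ∧ col v w = false)).card
        + (Finset.univ.filter (fun w : Fin n => col u w = true ∧ col v w = true)).card := by
    have := Finset.card_filter_add_card_filter_not
      (s := Finset.univ.filter (fun w : Fin n => col u w = true))
      (p := fun w => col v w = false)
    rw [Finset.filter_filter, Finset.filter_filter] at this
    simp only [Bool.not_eq_false] at this
    omega
  have hBv : (Finset.univ.filter (fun w : Fin n => col v w = true)).card
      = (Finset.univ.filter (fun w : Fin n => col u w = false ∧ col v w = true)).card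
        + (Finset.univ.filter (fun w : Fin n => col u w = true ∧ col v w = true)).card := by
    have := Finset.card_filter_add_card_filter_not
      (s := Finset.univ.filter (fun w : Fin n => col v w = true))
      (p := fun w => col u w = false)
    rw [Finset.filter_filter, Finset.filter_filter] at this
    simp only [Bool.not_eq_false] at this
    have h1 : Finset.univ.filter (fun w : Fin n => col v w = true ∧ col u w = false)
        = Finset.univ.filter (fun w : Fin n => col u w = false ∧ col v w = true) := by
      apply Finset.filter_congr; intro w _; simp [and_comm]
    have h2 : Finset.univ.filter (fun w : Fin n => col v w = true ∧ col u w = true)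
        = Finset.univ.filter (fun w : Fin n => col u w = true ∧ col v w = true) := by
      apply Finset.filter_congr; intro w _; simp [and_comm]
    rw [h1, h2] at this
    omega
  have hdiff : coBR - coRB = dB u - dB v := by
    rw [hBR, hRB, hdB, hdB, hBu, hBv]; push_cast; ring
  -- c ≤ n
  have hcn : coRB + coBR ≤ n := by
    rw [hBR, hRB]
    have hdisj : Disjoint
        (Finset.univ.filter (fun w : Fin n => col u w = false ∧ col v w = true))
        (Finset.univ.filter (fun w : Fin n => col u w = true ∧ col v w = false)) := by
      rw [Finset.disjoint_left]
      intro w hw hw2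
      simp only [Finset.mem_filter] at hw hw2
      simp [hw.2.1] at hw2
    have := Finset.card_union_of_disjoint hdisj
    have hle : (Finset.univ.filter (fun w : Fin n => col u w = false ∧ col v w = true)
        ∪ Finset.univ.filter (fun w : Fin n => col u w = true ∧ col v w = false)).card ≤ n := by
      calc _ ≤ (Finset.univ : Finset (Fin n)).card := Finset.card_le_card (Finset.subset_univ _)
        _ = n := by simp
    rw [this] at hle
    exact_mod_cast hle
  have hBR0 : (0:ℚ) ≤ coBR := by rw [hBR]; positivity
  have hRB0 : (0:ℚ) ≤ coRB := by rw [hRB]; positivity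
  have hdBu0 : (0:ℚ) ≤ dB u := by rw [hdB]; positivity
  have hdBv0 : (0:ℚ) ≤ dB v := by rw [hdB]; positivity
  have hRu : dR u = n - dB u := by linarith [hsum u]
  have hRv : dR v = n - dB v := by linarith [hsum v]
  rw [hRu, hRv]
  have e : coRB = coBR - dB u + dB v := by linarith
  rw [e] at hcn ⊢
  have hc0 : (0:ℚ) ≤ coBR - dB u + dB v + coBR := by linarith
  nlinarith [mul_nonneg hc0 (sq_nonneg ((n:ℚ) - 2 * dB u)),
    mul_nonneg hc0 (sq_nonneg ((n:ℚ) - 2 * dB v)),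
    mul_nonneg (sub_nonneg.2 hcn) (sq_nonneg (dB u - dB v))]
end
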